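/- arXiv:2504.17922 — 7 statements merged into one kernel-verified Lean document; each statement's English description precedes it below -/
import Mathlib

section
/- Let n ≥ 2, let λ₁, …, λₙ be real numbers, set H := ∑_i λ_i, and let ε₀ ∈ (0,1). Assume H ≥ 0 and min_i λ_i ≤ −ε₀·H. Then for every fully symmetric 3-tensor T : Fin n → Fin n → Fin n → ℝ one has ∑_i λ_i² · ( ‖T‖² − (T i i i)² ) ≥ (ε₀²/n²) · H² · ‖T‖². -/
open Finset

set_option maxHeartbeats 1000000 in
/-- Inequality (A.4) in the proof of Lemma A.1 of the paper: if the principal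
curvatures `lam i` have nonnegative sum `H` and the smallest one is at most
`−ε₀ H`, then for every fully symmetric 3-tensor `T`,
`∑_i lam_i² (‖T‖² − (T i i i)²) ≥ (ε₀²/n²) H² ‖T‖²`. -/
theorem stmt_2 (n : ℕ) (hn : 2 ≤ n)
    (lam : Fin n → ℝ) (H : ℝ) (hH : H = ∑ i, lam i)
    (ε₀ : ℝ) (hε₀ : ε₀ ∈ Set.Ioo (0 : ℝ) 1)
    (hHnonneg : 0 ≤ H)
    (hmin : ∃ i, lam i ≤ -ε₀ * H)
    (T : Fin n → Fin n → Fin n → ℝ)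
    (hT1 : ∀ i j k, T i j k = T j i k)
    (hT2 : ∀ i j k, T i j k = T i k j) :
    ∑ i, (lam i) ^ 2 * ((∑ a, ∑ b, ∑ c, (T a b c) ^ 2) - (T i i i) ^ 2)
      ≥ (ε₀ ^ 2 / (n : ℝ) ^ 2) * H ^ 2 * (∑ a, ∑ b, ∑ c, (T a b c) ^ 2) := by
  obtain ⟨hε0, hε1⟩ := hε₀
  haveI : NeZero n := ⟨by omega⟩
  have hnpos : (0:ℝ) < (n:ℝ) := by positivity
  set S := ∑ a, ∑ b, ∑ c, (T a b c) ^ 2 with hSdef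
  have hf : ∀ a : Fin n, (0:ℝ) ≤ ∑ b, ∑ c, (T a b c)^2 := fun a =>
    Finset.sum_nonneg fun b _ => Finset.sum_nonneg fun c _ => sq_nonneg _
  have hdiag : ∀ a : Fin n, (T a a a)^2 ≤ ∑ b, ∑ c, (T a b c)^2 := by
    intro a
    calc (T a a a)^2 ≤ ∑ c, (T a a c)^2 :=
          Finset.single_le_sum (f := fun c => (T a a c)^2)
            (fun c _ => sq_nonneg _) (Finset.mem_univ a)
      _ ≤ ∑ b, ∑ c, (T a b c)^2 :=
          Finset.single_le_sum (f := fun b => ∑ c, (T a b c)^2)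
            (fun b _ => Finset.sum_nonneg fun c _ => sq_nonneg _) (Finset.mem_univ a)
  have hdS : ∀ a, (T a a a)^2 ≤ S := fun a =>
    le_trans (hdiag a) (Finset.single_le_sum (fun b _ => hf b) (Finset.mem_univ a))
  have hSnonneg : 0 ≤ S := Finset.sum_nonneg fun a _ => hf a
  have hLnn : ∀ i : Fin n, 0 ≤ (lam i)^2 * (S - (T i i i)^2) := fun i =>
    mul_nonneg (sq_nonneg _) (by linarith [hdS i])
  rcases eq_or_lt_of_le hHnonneg with hH0 | hHpos
  · have hR : (ε₀ ^ 2 / (n : ℝ) ^ 2) * H ^ 2 * S = 0 := by rw [← hH0]; ring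
    rw [hR]
    exact Finset.sum_nonneg fun i _ => hLnn i
  · obtain ⟨i0, hi0⟩ := hmin
    obtain ⟨i1, hi1⟩ : ∃ i, H / (n:ℝ) ≤ lam i := by
      by_contra h
      push_neg at h
      have hlt : ∑ i, lam i < ∑ _i : Fin n, H / (n:ℝ) :=
        Finset.sum_lt_sum_of_nonempty Finset.univ_nonempty (fun i _ => h i)
      rw [Finset.sum_const, Finset.card_univ, Fintype.card_fin, nsmul_eq_mul] at hlt
      have : (n:ℝ) * (H / (n:ℝ)) = H := by field_simp
      rw [this] at hlt
      linarith [hH ▸ hlt]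
    have hHn : 0 < H / (n:ℝ) := div_pos hHpos hnpos
    have hεH : 0 < ε₀ * H := mul_pos hε0 hHpos
    have hne : i0 ≠ i1 := by
      intro h; rw [h] at hi0; nlinarith
    have hpair : lam i0 ^2 * (S - (T i0 i0 i0)^2) + lam i1 ^2 * (S - (T i1 i1 i1)^2)
        ≤ ∑ i, (lam i)^2 * (S - (T i i i)^2) := by
      have := Finset.sum_le_sum_of_subset_of_nonneg
        (Finset.subset_univ ({i0, i1} : Finset (Fin n)))
        (fun i _ _ => hLnn i)
      rwa [Finset.sum_pair hne] at this
    have hpairS : (T i0 i0 i0)^2 + (T i1 i1 i1)^2 ≤ S := by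
      have h1 := Finset.sum_le_sum_of_subset_of_nonneg
        (Finset.subset_univ ({i0, i1} : Finset (Fin n)))
        (fun a _ _ => hf a)
      rw [Finset.sum_pair hne] at h1
      linarith [hdiag i0, hdiag i1]
    set c : ℝ := (ε₀ ^ 2 / (n : ℝ) ^ 2) * H ^ 2 with hc
    have hcnn : 0 ≤ c := by positivity
    have hnR : (2:ℝ) ≤ (n:ℝ) := by exact_mod_cast hn
    have hn2 : (1:ℝ) ≤ (n:ℝ)^2 := by nlinarith
    have hb0 : c ≤ lam i0 ^ 2 := by
      have h2 : (ε₀*H)^2 ≤ lam i0^2 := by nlinarith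
      have h3 : c ≤ (ε₀*H)^2 := by
        have : c = ε₀^2 * H^2 / (n:ℝ)^2 := by rw [hc]; ring
        rw [this]
        calc ε₀^2 * H^2 / (n:ℝ)^2 ≤ ε₀^2 * H^2 := div_le_self (by positivity) hn2
          _ = (ε₀*H)^2 := by ring
      linarith
    have hb1 : c ≤ lam i1 ^ 2 := by
      have h2 : (H/(n:ℝ))^2 ≤ lam i1^2 := by nlinarith
      have h3 : c ≤ (H/(n:ℝ))^2 := by
        have he : (H/(n:ℝ))^2 = H^2 / (n:ℝ)^2 := div_pow H _ 2
        have hc' : c = ε₀^2 * H^2 / (n:ℝ)^2 := by rw [hc]; ring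
        rw [he, hc']
        have h4 : ε₀^2 ≤ 1 := by nlinarith [mul_pos (by linarith : (0:ℝ) < 1-ε₀) (by linarith : (0:ℝ) < 1+ε₀)]
        have h5 : ε₀^2 * H^2 ≤ H^2 := by
          have := mul_le_mul_of_nonneg_right h4 (sq_nonneg H)
          linarith
        exact (div_le_div_iff_of_pos_right (by positivity)).mpr h5
      linarith
    have e0 : c * (S - (T i0 i0 i0)^2) ≤ lam i0^2 * (S - (T i0 i0 i0)^2) :=
      mul_le_mul_of_nonneg_right hb0 (by linarith [hdS i0])
    have e1 : c * (S - (T i1 i1 i1)^2) ≤ lam i1^2 * (S - (T i1 i1 i1)^2) :=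
      mul_le_mul_of_nonneg_right hb1 (by linarith [hdS i1])
    have e2 : 0 ≤ c * (S - (T i0 i0 i0)^2 - (T i1 i1 i1)^2) :=
      mul_nonneg hcnn (by linarith)
    nlinarith [hpair, e0, e1, e2]
end

section
/- Let n ≥ 2 and ε₀ ∈ (0,1). Let λ₁, …, λₙ be real numbers with H := ∑_i λ_i satisfying min_i λ_i ≤ −ε₀·H < 0 (so H > 0). Let A : Fin n → Fin n → ℝ be the diagonal matrix with A i i = −λ_i, and let T : Fin n → Fin n → Fin n → ℝ be a fully symmetric 3-tensor. Then ‖A‖² > 0 and ‖T‖² − (1/‖A‖²)·∑_k ( ∑_{i,j} A i j · T i j k )² ≥ (ε₀²/(8n²)) · ‖T‖² · H² / ‖A‖². Equivalently, ∑_{i,j,k,p,q} (A i j · T k p q − T i j k · A p q)² ≥ (ε₀²/(4n²)) · H² · ‖T‖². -/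
/-!
Put `Q := ‖A‖² ‖T‖² - ∑ₖ ⟨A, T(·,·,k)⟩²`. Lagrange's identity turns the quintuple sum into `2 Q`,
so both inequalities say `8 Q ≥ β ‖T‖²` with `β = (ε₀ H / n)²`. For `A = diag d`, `Q` is the sum
over `k` of the Cauchy–Schwarz gaps of `d` against `(T i i k)ᵢ`, plus `‖d‖²` times the
off-diagonal mass of `T`. By symmetry an entry `T i i k` with `i ≠ k` equals the off-diagonal
entry `T i k i` of the slice `i`, so these are paid for by the off-diagonal mass; an entry
`T k k k` is paid for by the gap of slice `k` once some `j ≠ k` has `d j ² ≥ β`. Two such indices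
exist: the `m` with `λₘ ≤ -ε₀ H`, and an `l` with `λₗ ≥ H / n > 0`.
-/

open Finset

section

variable {ι : Type*} [Fintype ι]

theorem add_le_sum_of_ne {M : Type*} [AddCommMonoid M] [PartialOrder M] [IsOrderedAddMonoid M]
    {f : ι → M} (hf : ∀ i, 0 ≤ f i) {i j : ι} (hij : i ≠ j) : f i + f j ≤ ∑ k, f k := by
  classical
  rw [← sum_pair hij]
  exact sum_le_univ_sum_of_nonneg hf

theorem sum_sum_sq_mul_sub_mul {R : Type*} [CommRing R] (a b : ι → R) :
    ∑ p, ∑ q, (a p * b q - a q * b p) ^ 2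
      = 2 * ((∑ i, a i ^ 2) * (∑ i, b i ^ 2) - (∑ i, a i * b i) ^ 2) := by
  have expand : ∀ p q, (a p * b q - a q * b p) ^ 2
      = a p ^ 2 * b q ^ 2 + b p ^ 2 * a q ^ 2 - 2 * (a p * b p) * (a q * b q) :=
    fun p q => by ring
  simp only [expand, sum_add_distrib, sum_sub_distrib, ← mul_sum, ← sum_mul]
  ring

theorem sq_mul_sub_mul_le_of_ne (a b : ι → ℝ) {p q : ι} (hpq : p ≠ q) :
    (a p * b q - a q * b p) ^ 2
      ≤ (∑ i, a i ^ 2) * (∑ i, b i ^ 2) - (∑ i, a i * b i) ^ 2 := by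
  set F : ι → ι → ℝ := fun x y => (a x * b y - a y * b x) ^ 2
  have hF : ∀ x y, 0 ≤ F x y := fun x y => sq_nonneg _
  have hrows : F p q + F q p ≤ ∑ y, F p y + ∑ y, F q y :=
    add_le_add (single_le_sum (fun y _ => hF p y) (mem_univ q))
      (single_le_sum (fun y _ => hF q y) (mem_univ p))
  have hpair : ∑ y, F p y + ∑ y, F q y ≤ ∑ x, ∑ y, F x y :=
    add_le_sum_of_ne (fun x => sum_nonneg fun y _ => hF x y) hpq
  have hswap : F q p = F p q := by ring
  linarith [sum_sum_sq_mul_sub_mul a b]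

theorem sq_mul_sq_le_of_ne (a b : ι → ℝ) {j k : ι} (hjk : j ≠ k) :
    a j ^ 2 * b k ^ 2
      ≤ 2 * ((∑ i, a i ^ 2) * (∑ i, b i ^ 2) - (∑ i, a i * b i) ^ 2)
        + 2 * (∑ i, a i ^ 2) * (∑ i, b i ^ 2 - b k ^ 2) := by
  have hgap := sq_mul_sub_mul_le_of_ne a b hjk
  have ha : a k ^ 2 ≤ ∑ i, a i ^ 2 := single_le_sum (fun i _ => sq_nonneg (a i)) (mem_univ k)
  have hb : b j ^ 2 ≤ ∑ i, b i ^ 2 - b k ^ 2 :=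
    le_sub_right_of_add_le (add_le_sum_of_ne (fun i => sq_nonneg (b i)) hjk)
  have hab := mul_le_mul ha hb (sq_nonneg _) ((sq_nonneg _).trans ha)
  nlinarith [sq_nonneg (a j * b k - 2 * (a k * b j))]

theorem two_mul_sum_sq_row_sub_le {S : ι → ι → ℝ} (hS : ∀ i j, S i j = S j i) (k : ι) :
    2 * (∑ j, S k j ^ 2 - S k k ^ 2) ≤ ∑ i, ∑ j, S i j ^ 2 - ∑ i, S i i ^ 2 := by
  classical
  set r : ι → ℝ := fun i => ∑ j, S i j ^ 2 - S i i ^ 2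
  have hcol : ∑ i ∈ univ.erase k, S i k ^ 2 = r k := by
    simp only [r, sum_erase_eq_sub (mem_univ k), hS _ k]
  have hrows : ∑ i ∈ univ.erase k, S i k ^ 2 ≤ ∑ i ∈ univ.erase k, r i :=
    sum_le_sum fun i hi => le_sub_left_of_add_le
      (add_le_sum_of_ne (fun j => sq_nonneg (S i j)) (ne_of_mem_erase hi))
  have htotal : ∑ i, r i = ∑ i, ∑ j, S i j ^ 2 - ∑ i, S i i ^ 2 := sum_sub_distrib _ _
  linarith [add_sum_erase univ r (mem_univ k)]

theorem two_mul_sum_sq_diag_sub_le {T : ι → ι → ι → ℝ}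
    (hT1 : ∀ i j k, T i j k = T j i k) (hT2 : ∀ i j k, T i j k = T i k j) :
    2 * (∑ k, ∑ i, T i i k ^ 2 - ∑ k, T k k k ^ 2)
      ≤ ∑ a, ∑ b, ∑ c, T a b c ^ 2 - ∑ k, ∑ i, T i i k ^ 2 := by
  have hslices := sum_le_sum fun k (_ : k ∈ univ) =>
    two_mul_sum_sq_row_sub_le (S := fun i j => T i j k) (fun i j => hT1 i j k) k
  have hrow : ∑ k, ∑ j, T k j k ^ 2 = ∑ k, ∑ i, T i i k ^ 2 := by
    rw [sum_comm]
    exact sum_congr rfl fun k _ => sum_congr rfl fun i _ => by rw [hT2]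
  have htotal : ∑ k, ∑ i, ∑ j, T i j k ^ 2 = ∑ a, ∑ b, ∑ c, T a b c ^ 2 :=
    sum_congr rfl fun k _ => sum_congr rfl fun i _ => sum_congr rfl fun j _ => by
      rw [hT2 i j k, hT1 i k j]
  simp only [← mul_sum, sum_sub_distrib, hrow, htotal] at hslices
  exact hslices

theorem mul_sum_sq_le_of_two_large_entries (d : ι → ℝ) {T : ι → ι → ι → ℝ}
    (hT1 : ∀ i j k, T i j k = T j i k) (hT2 : ∀ i j k, T i j k = T i k j)
    {β : ℝ} {m l : ι} (hml : m ≠ l) (hm : β ≤ d m ^ 2) (hl : β ≤ d l ^ 2) :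
    β * ∑ a, ∑ b, ∑ c, T a b c ^ 2
      ≤ 8 * ((∑ i, d i ^ 2) * ∑ a, ∑ b, ∑ c, T a b c ^ 2 - ∑ k, (∑ i, d i * T i i k) ^ 2) := by
  set N := ∑ i, d i ^ 2
  set TT := ∑ a, ∑ b, ∑ c, T a b c ^ 2
  set P := ∑ k, ∑ i, T i i k ^ 2
  set X := ∑ k, T k k k ^ 2
  set G : ι → ℝ := fun k => N * ∑ i, T i i k ^ 2 - (∑ i, d i * T i i k) ^ 2
  have hG : ∀ k, 0 ≤ G k := fun k => sub_nonneg.2 <|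
    sum_mul_sq_le_sq_mul_sq univ d fun i => T i i k
  have hsumG : ∑ k, G k = N * P - ∑ k, (∑ i, d i * T i i k) ^ 2 := by
    simp only [G]
    rw [sum_sub_distrib, ← mul_sum]
  have hβN : β ≤ N := hm.trans (single_le_sum (fun i _ => sq_nonneg (d i)) (mem_univ m))
  have hcorner : ∀ k, β * T k k k ^ 2 ≤ 2 * G k + 2 * N * (∑ i, T i i k ^ 2 - T k k k ^ 2) := by
    intro k
    obtain ⟨j, hjk, hj⟩ : ∃ j ≠ k, β ≤ d j ^ 2 := by
      by_cases hk : k = m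
      · exact ⟨l, hk ▸ hml.symm, hl⟩
      · exact ⟨m, Ne.symm hk, hm⟩
    calc β * T k k k ^ 2 ≤ d j ^ 2 * T k k k ^ 2 := by gcongr
      _ ≤ _ := sq_mul_sq_le_of_ne d (fun i => T i i k) hjk
  have hX : β * X ≤ 2 * ∑ k, G k + 2 * N * (P - X) := by
    have := sum_le_sum fun k (_ : k ∈ univ) => hcorner k
    simpa only [← mul_sum, sum_add_distrib, sum_sub_distrib] using this
  have hoff : 2 * (P - X) ≤ TT - P := two_mul_sum_sq_diag_sub_le hT1 hT2
  have hPX : 0 ≤ P - X := sub_nonneg.2 <| sum_le_sum fun k _ =>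
    single_le_sum (fun i _ => sq_nonneg (T i i k)) (mem_univ k)
  have hN : 0 ≤ N := sum_nonneg fun i _ => sq_nonneg (d i)
  -- `β TT = β X + β (P - X) + β (TT - P) ≤ 2 ∑ G + 3 N (P - X) + N (TT - P)`
  nlinarith [sum_nonneg fun k (_ : k ∈ univ) => hG k, mul_le_mul_of_nonneg_right hβN hPX,
    mul_le_mul_of_nonneg_right hβN (show 0 ≤ TT - P by linarith),
    mul_le_mul_of_nonneg_left hoff hN]

theorem sum_sq_mul_sub_mul_eq_two_mul {R : Type*} [CommRing R] (A : ι → ι → R)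
    {T : ι → ι → ι → R} (hT : ∀ i j k, T i j k = T j k i) :
    ∑ i, ∑ j, ∑ k, ∑ p, ∑ q, (A i j * T k p q - T i j k * A p q) ^ 2
      = 2 * ((∑ i, ∑ j, A i j ^ 2) * ∑ a, ∑ b, ∑ c, T a b c ^ 2
        - ∑ k, (∑ i, ∑ j, A i j * T i j k) ^ 2) := by
  have hslice : ∀ k, ∑ i, ∑ j, ∑ p, ∑ q, (A i j * T p q k - A p q * T i j k) ^ 2
      = 2 * ((∑ i, ∑ j, A i j ^ 2) * (∑ p, ∑ q, T p q k ^ 2)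
        - (∑ i, ∑ j, A i j * T i j k) ^ 2) := by
    intro k
    have := sum_sum_sq_mul_sub_mul (fun x : ι × ι => A x.1 x.2) (fun x => T x.1 x.2 k)
    simpa only [Fintype.sum_prod_type] using this
  have htotal : ∑ k, ∑ p, ∑ q, T p q k ^ 2 = ∑ a, ∑ b, ∑ c, T a b c ^ 2 :=
    sum_congr rfl fun k _ => sum_congr rfl fun p _ => sum_congr rfl fun q _ => by rw [← hT k p q]
  calc _ = ∑ i, ∑ j, ∑ k, ∑ p, ∑ q, (A i j * T p q k - A p q * T i j k) ^ 2 :=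
        sum_congr rfl fun i _ => sum_congr rfl fun j _ => sum_congr rfl fun k _ =>
          sum_congr rfl fun p _ => sum_congr rfl fun q _ => by rw [hT k p q, mul_comm (T i j k)]
    _ = ∑ k, ∑ i, ∑ j, ∑ p, ∑ q, (A i j * T p q k - A p q * T i j k) ^ 2 :=
        (sum_congr rfl fun i _ => sum_comm).trans sum_comm
    _ = _ := by rw [sum_congr rfl fun k _ => hslice k, ← mul_sum, sum_sub_distrib, ← mul_sum,
          htotal]

end

theorem exists_two_large_entries {n : ℕ} (lam : Fin n → ℝ) {H ε : ℝ} (hH : H = ∑ i, lam i)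
    (hε0 : 0 < ε) (hε1 : ε < 1) {m : Fin n} (hm : lam m ≤ -ε * H) (hneg : -ε * H < 0) :
    ∃ l ≠ m, (ε * H / n) ^ 2 ≤ lam m ^ 2 ∧ (ε * H / n) ^ 2 ≤ lam l ^ 2 := by
  have hH0 : 0 < H := by nlinarith
  have hn : (1 : ℝ) ≤ n := Nat.one_le_cast.2 m.pos
  obtain ⟨l, -, hl⟩ : ∃ l ∈ univ, H / n ≤ lam l :=
    exists_le_of_sum_le ⟨m, mem_univ m⟩ <| by
      simp [mul_div_cancel₀ _ (by positivity : (n : ℝ) ≠ 0), hH]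
  have hβ : 0 ≤ ε * H / n := by positivity
  refine ⟨l, fun hlm => ?_, ?_, ?_⟩
  · have : 0 < H / n := by positivity
    subst hlm
    linarith
  · rw [← neg_sq (lam m)]
    exact pow_le_pow_left₀ hβ ((div_le_self (by positivity) hn).trans (by linarith)) 2
  · have hεH : ε * H / n ≤ H / n := by gcongr; nlinarith
    exact pow_le_pow_left₀ hβ (hεH.trans hl) 2

theorem stmt_3_general (n : ℕ)
    (ε₀ : ℝ) (hε₀ : ε₀ ∈ Set.Ioo (0 : ℝ) 1)
    (lam : Fin n → ℝ) (H : ℝ) (hH : H = ∑ i, lam i)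
    (hmin : ∃ i, lam i ≤ -ε₀ * H) (hneg : -ε₀ * H < 0)
    (A : Fin n → Fin n → ℝ)
    (hA : ∀ i j, A i j = if i = j then -lam i else 0)
    (T : Fin n → Fin n → Fin n → ℝ)
    (hT1 : ∀ i j k, T i j k = T j i k)
    (hT2 : ∀ i j k, T i j k = T i k j) :
    0 < ∑ i, ∑ j, (A i j) ^ 2 ∧
    (∑ a, ∑ b, ∑ c, (T a b c) ^ 2)
        - (1 / (∑ i, ∑ j, (A i j) ^ 2)) * ∑ k, (∑ i, ∑ j, A i j * T i j k) ^ 2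
      ≥ (ε₀ ^ 2 / (8 * (n : ℝ) ^ 2)) * (∑ a, ∑ b, ∑ c, (T a b c) ^ 2) * H ^ 2
          / (∑ i, ∑ j, (A i j) ^ 2) ∧
    ∑ i, ∑ j, ∑ k, ∑ p, ∑ q, (A i j * T k p q - T i j k * A p q) ^ 2
      ≥ (ε₀ ^ 2 / (4 * (n : ℝ) ^ 2)) * H ^ 2 * (∑ a, ∑ b, ∑ c, (T a b c) ^ 2) := by
  obtain ⟨m, hm⟩ := hmin
  obtain ⟨l, hlm, hβm, hβl⟩ := exists_two_large_entries lam hH hε₀.1 hε₀.2 hm hneg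
  rw [← neg_sq (lam m)] at hβm
  rw [← neg_sq (lam l)] at hβl
  have key := mul_sum_sq_le_of_two_large_entries (fun i => -lam i) hT1 hT2 hlm.symm hβm hβl
  have hN : 0 < ∑ i, (-lam i) ^ 2 := (pow_pos (by linarith) 2).trans_le
    (single_le_sum (fun i _ => sq_nonneg (-lam i)) (mem_univ m))
  have hA_sq : ∑ i, ∑ j, A i j ^ 2 = ∑ i, (-lam i) ^ 2 := by simp [hA]
  have hA_mul : ∀ k, ∑ i, ∑ j, A i j * T i j k = ∑ i, -lam i * T i i k := by simp [hA]
  rw [sum_sq_mul_sub_mul_eq_two_mul A fun i j k => by rw [hT1, hT2]]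
  simp only [hA_sq, hA_mul]
  set N := ∑ i, (-lam i) ^ 2
  set TT := ∑ a, ∑ b, ∑ c, T a b c ^ 2
  set Q := ∑ k, (∑ i, -lam i * T i i k) ^ 2
  have h8 : (ε₀ * H / n) ^ 2 * TT = 8 * (ε₀ ^ 2 / (8 * n ^ 2) * TT * H ^ 2) := by
    field_simp
  have h4 : ε₀ ^ 2 / (4 * n ^ 2) * H ^ 2 * TT = 2 * (ε₀ ^ 2 / (8 * n ^ 2) * TT * H ^ 2) := by
    ring
  have hQ : (TT - 1 / N * Q) * N = N * TT - Q := by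
    field_simp
  refine ⟨hN, ?_, by linarith⟩
  rw [ge_iff_le, div_le_iff₀ hN, hQ]
  linarith

/-- Lemma A.1 of the paper (cf. Langford, Lemma 2.1): if the smallest principal
curvature satisfies `λ₁ ≤ −ε₀ H < 0`, and `A` is the diagonal matrix of the
second fundamental form (entries `−lam i`) while `T` is the fully symmetric
tensor `∇A`, then `|A| > 0`,
`|∇A|² − |∇|A||² ≥ (ε₀²/(8n²)) |∇A|² H²/|A|²`, and equivalently
`|A ⊗ ∇A − ∇A ⊗ A|² ≥ (ε₀²/(4n²)) H² |∇A|²`. -/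
theorem stmt_3 (n : ℕ) (hn : 2 ≤ n)
    (ε₀ : ℝ) (hε₀ : ε₀ ∈ Set.Ioo (0 : ℝ) 1)
    (lam : Fin n → ℝ) (H : ℝ) (hH : H = ∑ i, lam i)
    (hmin : ∃ i, lam i ≤ -ε₀ * H) (hneg : -ε₀ * H < 0)
    (A : Fin n → Fin n → ℝ)
    (hA : ∀ i j, A i j = if i = j then -lam i else 0)
    (T : Fin n → Fin n → Fin n → ℝ)
    (hT1 : ∀ i j k, T i j k = T j i k)
    (hT2 : ∀ i j k, T i j k = T i k j) :
    0 < ∑ i, ∑ j, (A i j) ^ 2 ∧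
    (∑ a, ∑ b, ∑ c, (T a b c) ^ 2)
        - (1 / (∑ i, ∑ j, (A i j) ^ 2)) * ∑ k, (∑ i, ∑ j, A i j * T i j k) ^ 2
      ≥ (ε₀ ^ 2 / (8 * (n : ℝ) ^ 2)) * (∑ a, ∑ b, ∑ c, (T a b c) ^ 2) * H ^ 2
          / (∑ i, ∑ j, (A i j) ^ 2) ∧
    ∑ i, ∑ j, ∑ k, ∑ p, ∑ q, (A i j * T k p q - T i j k * A p q) ^ 2
      ≥ (ε₀ ^ 2 / (4 * (n : ℝ) ^ 2)) * H ^ 2 * (∑ a, ∑ b, ∑ c, (T a b c) ^ 2) :=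
  stmt_3_general n ε₀ hε₀ lam H hH hmin hneg A hA T hT1 hT2
end

section
/- Let n ≥ 2 and let λ₁, …, λₙ be real numbers with H := ∑_i λ_i ≥ 0. Let ε̄ > 0 and L > 0, and assume min_i λ_i ≤ −ε̄·H and 0 < ∑_i λ_i² ≤ L²·H². Then ∑_{i,j} λ_i² λ_j² (λ_j − λ_i)² ≥ (ε̄²/(L² n⁴)) · (∑_i λ_i²) · H⁴. -/
open Finset

/-- The lower bound (3.2) in the proof of Proposition 3.4 of the paper:
for principal curvatures with `H = ∑ λ_i ≥ 0`, smallest principal curvature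
at most `−ε̄ H`, and pinching `0 < ∑ λ_i² ≤ L² H²`, one has
`∑_{i,j} λ_i² λ_j² (λ_j − λ_i)² ≥ (ε̄²/(L² n⁴)) (∑ λ_i²) H⁴`. -/
theorem stmt_5 (n : ℕ) (hn : 2 ≤ n)
    (lam : Fin n → ℝ) (H : ℝ) (hH : H = ∑ i, lam i) (hHnonneg : 0 ≤ H)
    (ε L : ℝ) (hε : 0 < ε) (hL : 0 < L)
    (hmin : ∃ i, lam i ≤ -ε * H)
    (hpos : 0 < ∑ i, (lam i) ^ 2)
    (hpinch : ∑ i, (lam i) ^ 2 ≤ L ^ 2 * H ^ 2) :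
    ∑ i, ∑ j, (lam i) ^ 2 * (lam j) ^ 2 * (lam j - lam i) ^ 2
      ≥ (ε ^ 2 / (L ^ 2 * (n : ℝ) ^ 4)) * (∑ i, (lam i) ^ 2) * H ^ 4 := by
  obtain ⟨i₀, hi₀⟩ := hmin
  have hn0 : (0:ℝ) < (n:ℝ) := by
    have : (0:ℕ) < n := by omega
    exact_mod_cast this
  rcases eq_or_lt_of_le hHnonneg with h0 | hHpos
  · have hz : (ε ^ 2 / (L ^ 2 * (n : ℝ) ^ 4)) * (∑ i, (lam i) ^ 2) * H ^ 4 = 0 := by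
      rw [← h0]; ring
    rw [hz]
    apply Finset.sum_nonneg
    intro i _
    apply Finset.sum_nonneg
    intro j _
    positivity
  · -- find j₀ with lam j₀ ≥ H / n
    obtain ⟨j₀, hj₀⟩ : ∃ j, H / n ≤ lam j := by
      by_contra h
      push_neg at h
      have hne : (Finset.univ : Finset (Fin n)).Nonempty := by
        refine ⟨⟨0, by omega⟩, Finset.mem_univ _⟩
      have := Finset.sum_lt_sum_of_nonempty hne (fun i _ => h i)
      rw [← hH, Finset.sum_const, Finset.card_univ, Fintype.card_fin] at this
      have : H < H := by
        calc H < n • (H / n) := this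
        _ = n * (H / n) := by simp [nsmul_eq_mul]
        _ = H := by field_simp
      exact lt_irrefl _ this
    set f : Fin n → Fin n → ℝ :=
      fun i j => (lam i) ^ 2 * (lam j) ^ 2 * (lam j - lam i) ^ 2 with hf
    have hkey : ε ^ 2 * H ^ 2 * (H / n) ^ 2 * (H / n) ^ 2 ≤ f i₀ j₀ := by
      have hi₀' : ε * H ≤ -lam i₀ := by linarith
      have hεH0 : (0:ℝ) ≤ ε * H := by positivity
      have h1 : (ε * H) ^ 2 ≤ (lam i₀) ^ 2 := by
        have := pow_le_pow_left₀ hεH0 hi₀' 2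
        nlinarith [this]
      have hj0 : (0:ℝ) ≤ H / n := by positivity
      have h2 : (H / n) ^ 2 ≤ (lam j₀) ^ 2 := by nlinarith
      have h3 : (H / n) ^ 2 ≤ (lam j₀ - lam i₀) ^ 2 := by
        have hd : H / n ≤ lam j₀ - lam i₀ := by nlinarith
        exact pow_le_pow_left₀ hj0 hd 2
      have hεH : (0:ℝ) ≤ (ε * H) ^ 2 := by positivity
      have hHn2 : (0:ℝ) ≤ (H / n) ^ 2 := by positivity
      calc ε ^ 2 * H ^ 2 * (H / n) ^ 2 * (H / n) ^ 2
          = (ε * H) ^ 2 * (H / n) ^ 2 * (H / n) ^ 2 := by ring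
        _ ≤ (lam i₀) ^ 2 * (lam j₀) ^ 2 * (lam j₀ - lam i₀) ^ 2 := by
            apply mul_le_mul
            apply mul_le_mul h1 h2 hHn2 (by positivity)
            exact h3
            exact hHn2
            positivity
    have hsum : f i₀ j₀ ≤ ∑ i, ∑ j, f i j := by
      have h1 : f i₀ j₀ ≤ ∑ j, f i₀ j :=
        Finset.single_le_sum (fun j _ => by positivity) (Finset.mem_univ j₀)
      have h2 : (∑ j, f i₀ j) ≤ ∑ i, ∑ j, f i j :=
        Finset.single_le_sum
          (fun i _ => Finset.sum_nonneg fun j _ => by positivity)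
          (Finset.mem_univ i₀)
      linarith
    have hRHS : (ε ^ 2 / (L ^ 2 * (n : ℝ) ^ 4)) * (∑ i, (lam i) ^ 2) * H ^ 4
        ≤ ε ^ 2 * H ^ 2 * (H / n) ^ 2 * (H / n) ^ 2 := by
      have hc : (0:ℝ) ≤ ε ^ 2 / (L ^ 2 * (n : ℝ) ^ 4) * H ^ 4 := by positivity
      calc (ε ^ 2 / (L ^ 2 * (n : ℝ) ^ 4)) * (∑ i, (lam i) ^ 2) * H ^ 4
          ≤ (ε ^ 2 / (L ^ 2 * (n : ℝ) ^ 4)) * (L ^ 2 * H ^ 2) * H ^ 4 := by nlinarith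
        _ = ε ^ 2 * H ^ 2 * (H / n) ^ 2 * (H / n) ^ 2 := by field_simp
    calc (ε ^ 2 / (L ^ 2 * (n : ℝ) ^ 4)) * (∑ i, (lam i) ^ 2) * H ^ 4
        ≤ ε ^ 2 * H ^ 2 * (H / n) ^ 2 * (H / n) ^ 2 := hRHS
      _ ≤ f i₀ j₀ := hkey
      _ ≤ ∑ i, ∑ j, f i j := hsum
end

section
/- Let C > 0 and let J : (−∞, 0) → ℝ be a differentiable function with J(t) ≥ 0 for all t < 0 and J′(t) ≤ −C · (−t)^{1/2} · J(t)⁵ for all t < 0. Then J(t) = 0 for all t < 0. -/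
/-!
If `J t₀ > 0`, then `J` is antitone, so `J ≥ J t₀ > 0` on `(-∞, t₀]`, and there the inequality
gives `J′ ≤ -c J⁵` with `c = C √(-t₀)`. Hence `J⁻⁴` grows at rate at least `4c` as time increases,
i.e. it decreases at least linearly going backwards in time, so it must become nonpositive on
`(-∞, t₀]`, which is absurd for a positive function.
-/

open Set

theorem le_deriv_zpow_neg_of_deriv_le_neg_mul_pow {f : ℝ → ℝ} {c x : ℝ} (n : ℕ)
    (hf : DifferentiableAt ℝ f x) (hx : 0 < f x) (hode : deriv f x ≤ -c * f x ^ (n + 1)) :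
    n * c ≤ deriv (fun t => f t ^ (-(n : ℤ))) x := by
  have hderiv : HasDerivAt (fun t => f t ^ (-(n : ℤ)))
      (-(n * f x ^ (-(n : ℤ) - 1)) * deriv f x) x :=
    ((hasDerivAt_zpow (-(n : ℤ)) (f x) (Or.inl hx.ne')).comp x hf.hasDerivAt).congr_deriv
      (by push_cast; ring)
  have hpow : f x ^ (-(n : ℤ) - 1) * f x ^ (n + 1) = 1 := by
    rw [← zpow_natCast, ← zpow_add₀ hx.ne']
    push_cast
    simp
  rw [hderiv.deriv]
  calc (n : ℝ) * c = -(n * f x ^ (-(n : ℤ) - 1)) * (-c * f x ^ (n + 1)) := by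
        linear_combination (-(n : ℝ) * c) * hpow
    _ ≤ -(n * f x ^ (-(n : ℤ) - 1)) * deriv f x :=
        mul_le_mul_of_nonpos_left hode (neg_nonpos.2 (by positivity))

theorem exists_nonpos_of_pos_le_deriv {g : ℝ → ℝ} {a b : ℝ} (ha : 0 < a)
    (hg : ∀ t ≤ b, DifferentiableAt ℝ g t) (hg' : ∀ t ≤ b, a ≤ deriv g t) :
    ∃ t ≤ b, g t ≤ 0 := by
  have growth := (convex_Iic b).mul_sub_le_image_sub_of_le_deriv
    (fun t ht => (hg t ht).continuousAt.continuousWithinAt)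
    (fun t ht => (hg t (interior_subset (s := Iic b) ht)).differentiableWithinAt)
    (fun t ht => hg' t (interior_subset (s := Iic b) ht))
  set s := b - max (g b) 0 / a
  have hs : s ≤ b := sub_le_self _ (by positivity)
  refine ⟨s, hs, ?_⟩
  have := growth s hs b (mem_Iic.2 le_rfl) hs
  rw [sub_sub_cancel, mul_div_cancel₀ _ ha.ne'] at this
  linarith [le_max_left (g b) 0]

theorem exists_nonpos_of_deriv_le_neg_mul_pow {f : ℝ → ℝ} {c b : ℝ} {n : ℕ} (hc : 0 < c)
    (hn : n ≠ 0) (hf : ∀ t ≤ b, DifferentiableAt ℝ f t)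
    (hode : ∀ t ≤ b, deriv f t ≤ -c * f t ^ (n + 1)) :
    ∃ t ≤ b, f t ≤ 0 := by
  by_contra! hpos
  obtain ⟨t, htb, ht⟩ := exists_nonpos_of_pos_le_deriv (g := fun t => f t ^ (-(n : ℤ)))
    (mul_pos (Nat.cast_pos.2 (Nat.pos_of_ne_zero hn)) hc)
    (fun t ht => ((hasDerivAt_zpow _ _ (Or.inl (hpos t ht).ne')).comp t
      (hf t ht).hasDerivAt).differentiableAt)
    (fun t ht => le_deriv_zpow_neg_of_deriv_le_neg_mul_pow n (hf t ht) (hpos t ht) (hode t ht))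
  exact (zpow_pos (hpos t htb) _).not_ge ht

/-- The ODE rigidity step in the proof of Theorem 1.3 of the paper: a
nonnegative differentiable function `J` on `(−∞, 0)` satisfying
`J′(t) ≤ −C (−t)^{1/2} J(t)⁵` must vanish identically. -/
theorem stmt_6 (C : ℝ) (hC : 0 < C) (J : ℝ → ℝ)
    (hdiff : ∀ t < (0 : ℝ), DifferentiableAt ℝ J t)
    (hnonneg : ∀ t < (0 : ℝ), 0 ≤ J t)
    (hode : ∀ t < (0 : ℝ), deriv J t ≤ -C * Real.sqrt (-t) * (J t) ^ 5) :
    ∀ t < (0 : ℝ), J t = 0 := by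
  intro t₀ ht₀
  have hanti : AntitoneOn J (Iio 0) := by
    refine antitoneOn_of_deriv_nonpos (convex_Iio 0)
      (fun t ht => (hdiff t ht).continuousAt.continuousWithinAt)
      (fun t ht => (hdiff t (interior_subset (s := Iio 0) ht)).differentiableWithinAt)
      fun t ht => ?_
    rw [interior_Iio] at ht
    refine (hode t ht).trans ?_
    rw [neg_mul, neg_mul, neg_nonpos]
    have := hnonneg t ht
    positivity
  have hode₀ : ∀ t ≤ t₀, deriv J t ≤ -(C * Real.sqrt (-t₀)) * J t ^ 5 := by
    intro t ht
    have hsqrt : Real.sqrt (-t₀) ≤ Real.sqrt (-t) := Real.sqrt_le_sqrt (neg_le_neg ht)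
    have hJ5 := pow_nonneg (hnonneg t (ht.trans_lt ht₀)) 5
    nlinarith [hode t (ht.trans_lt ht₀), mul_le_mul_of_nonneg_left hsqrt (mul_nonneg hC.le hJ5)]
  by_contra hne
  have hpos : 0 < J t₀ := (hnonneg t₀ ht₀).lt_of_ne' hne
  obtain ⟨t, ht, hJt⟩ := exists_nonpos_of_deriv_le_neg_mul_pow
    (mul_pos hC (Real.sqrt_pos.2 (neg_pos.2 ht₀))) four_ne_zero
    (fun t ht => hdiff t (ht.trans_lt ht₀)) hode₀
  exact (hpos.trans_le (hanti (ht.trans_lt ht₀) ht₀ ht)).not_ge hJt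
end

section
/- Let T > 0 and let F : [0, T] → ℝ be continuous on [0, T], differentiable on (0, T), with F(0) = 0 and F′(t) ≤ (F(t)/t) · (1 − F(t)) for all t ∈ (0, T). Then F(t) ≤ 1 for all t ∈ [0, T]. -/
/-- The ODE comparison step in the proof of Theorem 2.2 of the paper: if `F` is
continuous on `[0, T]`, differentiable on `(0, T)`, `F(0) = 0`, and
`F′(t) ≤ (F(t)/t)(1 − F(t))` on `(0, T)`, then `F ≤ 1` on `[0, T]`. -/
theorem stmt_7 (T : ℝ) (hT : 0 < T) (F : ℝ → ℝ)
    (hcont : ContinuousOn F (Set.Icc 0 T))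
    (hdiff : ∀ t ∈ Set.Ioo (0 : ℝ) T, DifferentiableAt ℝ F t)
    (hF0 : F 0 = 0)
    (hode : ∀ t ∈ Set.Ioo (0 : ℝ) T, deriv F t ≤ (F t / t) * (1 - F t)) :
    ∀ t ∈ Set.Icc (0 : ℝ) T, F t ≤ 1 := by
  intro t₀ ht₀
  by_contra h
  push_neg at h
  obtain ⟨ht₀0, ht₀T⟩ := ht₀
  have ht₀pos : 0 < t₀ := by
    rcases ht₀0.lt_or_eq with h' | h'
    · exact h'
    · exfalso; rw [← h', hF0] at h; linarith
  -- set of times ≤ t₀ where F ≤ 1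
  set S : Set ℝ := Set.Icc 0 t₀ ∩ F ⁻¹' Set.Iic 1 with hS
  have hsub : Set.Icc (0:ℝ) t₀ ⊆ Set.Icc 0 T := Set.Icc_subset_Icc le_rfl ht₀T
  have hSclosed : IsClosed S := by
    apply ContinuousOn.preimage_isClosed_of_isClosed (hcont.mono hsub)
      isClosed_Icc isClosed_Iic
  have hSne : S.Nonempty := ⟨0, ⟨le_rfl, le_of_lt ht₀pos⟩, by simp [hF0]⟩
  have hSbdd : BddAbove S := ⟨t₀, fun x hx => hx.1.2⟩
  set s := sSup S with hs
  have hsS : s ∈ S := hSclosed.csSup_mem hSne hSbdd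
  have hFs : F s ≤ 1 := hsS.2
  have hst₀ : s < t₀ := by
    rcases (hsS.1.2).lt_or_eq with h' | h'
    · exact h'
    · exfalso; rw [h'] at hFs; linarith
  have hs0 : 0 ≤ s := hsS.1.1
  -- on (s, t₀], F > 1
  have hgt : ∀ t ∈ Set.Ioc s t₀, 1 < F t := by
    intro t ht
    by_contra hle
    push_neg at hle
    have : t ∈ S := ⟨⟨le_trans hs0 ht.1.le, ht.2⟩, hle⟩
    exact absurd (le_csSup hSbdd this) (not_le.mpr ht.1)
  -- deriv F < 0 on (s, t₀)
  have hderiv : ∀ t ∈ interior (Set.Icc s t₀), deriv F t < 0 := by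
    intro t ht
    rw [interior_Icc] at ht
    have htT : t ∈ Set.Ioo (0:ℝ) T :=
      ⟨lt_of_le_of_lt hs0 ht.1, lt_of_lt_of_le ht.2 ht₀T⟩
    have h1 : 1 < F t := hgt t ⟨ht.1, ht.2.le⟩
    have := hode t htT
    have hneg : (F t / t) * (1 - F t) < 0 := by
      apply mul_neg_of_pos_of_neg
      · exact div_pos (by linarith) htT.1
      · linarith
    linarith
  have hanti : StrictAntiOn F (Set.Icc s t₀) :=
    strictAntiOn_of_deriv_neg (convex_Icc s t₀)
      (hcont.mono (Set.Icc_subset_Icc hs0 ht₀T)) hderiv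
  have := hanti ⟨le_rfl, hst₀.le⟩ ⟨hst₀.le, le_rfl⟩ hst₀
  linarith [hgt t₀ ⟨hst₀, le_rfl⟩]
end

section
/- For all real numbers a₂ > 0 and a₃ > 0, one has min{ a₂, 2(1 − a₂)/(1 + a₃), a₃/(1 + a₃) } ≤ 1/2, and equality holds when a₂ = 1/2 and a₃ = 1. In other words, the maximum of F(a₂, a₃) := min{ a₂, 2(1 − a₂)/(1 + a₃), a₃/(1 + a₃) } over a₂, a₃ > 0 is 1/2, attained at (a₂, a₃) = (1/2, 1). -/
/-- The optimization claim at the end of Appendix B.2 of the paper: the maximum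
of `F(a₂, a₃) = min{a₂, 2(1−a₂)/(1+a₃), a₃/(1+a₃)}` over `a₂, a₃ > 0` is `1/2`,
attained at `(a₂, a₃) = (1/2, 1)`. -/
theorem stmt_9 :
    (∀ a₂ a₃ : ℝ, 0 < a₂ → 0 < a₃ →
      min a₂ (min (2 * (1 - a₂) / (1 + a₃)) (a₃ / (1 + a₃))) ≤ 1 / 2) ∧
    min (1 / 2 : ℝ)
      (min (2 * (1 - (1 / 2 : ℝ)) / (1 + 1)) ((1 : ℝ) / (1 + 1))) = 1 / 2 := by
  constructor
  · intro a₂ a₃ h2 h3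
    have hpos : (0:ℝ) < 1 + a₃ := by linarith
    rcases le_or_gt a₂ (1/2) with h | h
    · exact le_trans (min_le_left _ _) h
    · rcases le_or_gt a₃ 1 with h1 | h1
      · refine le_trans (le_trans (min_le_right _ _) (min_le_right _ _)) ?_
        rw [div_le_div_iff₀ hpos (by norm_num)]; linarith
      · refine le_trans (le_trans (min_le_right _ _) (min_le_left _ _)) ?_
        rw [div_le_div_iff₀ hpos (by norm_num)]; nlinarith
  · norm_num
end

section
/- With the notation of the codimension-m pointwise algebra for a vector-valued second fundamental form (see context), for every real c₀ with c₀ > 1/n the following identity holds: c₀·|⟨A,H⟩|² − |⟨A,A⟩|² − |R⊥|² = (2/(nc₀−1))·‖Â‖²·f + (nc₀/(nc₀−1))·‖ḣ‖²·f + (1/(nc₀−1))·f² + 2·( 2‖ḣ‖²‖Â‖² − |ḣ·Â|² − |R⊥(ν₁)|² ) + ( (3/2)‖Â‖⁴ − |⟨Â,Â⟩|² − |R̂⊥|² ) + ( 1/(nc₀−1) − 3/2 )·‖Â‖⁴ + ( nc₀/(nc₀−1) − 4 )·‖ḣ‖²·‖Â‖². -/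
/-!
Split the second fundamental form along the principal normal, `A = h ν + Â` with `Â ⊥ ν`, and
`h = ḣ + (‖H‖/n) δ` with `ḣ` tracefree. Then every quantity on the left is a polynomial in
`‖H‖²`, `‖ḣ‖²`, `‖Â‖²` and the purely complementary terms:
`|⟨A,H⟩|² = ‖H‖² ‖h‖²`, `‖A‖² = ‖h‖² + ‖Â‖²`, `‖h‖² = ‖ḣ‖² + ‖H‖²/n`,
`|⟨A,A⟩|² = ‖h‖⁴ + 2|h·Â|² + |⟨Â,Â⟩|²` and `|R⊥|² = 2|R⊥(ν)|² + |R̂⊥|²`, where `h` may be replaced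
by `ḣ` in `h·Â` and in `R⊥(ν)` because `Â` is tracefree and symmetric. The normal curvature is
handled coordinate-free: `|R⊥|²` is twice the Gram-determinant norm of the bivectors
`∑ₖ A_ik ∧ A_jk`, which splits orthogonally along `ν`. Substituting, the identity is an identity
of rational functions in `c₀`.
-/

open Finset
open scoped RealInnerProductSpace

section InnerProduct

variable {E : Type*} [NormedAddCommGroup E] [InnerProductSpace ℝ E]

theorem inner_sub_inner_smul_self {ν : E} (hν : ‖ν‖ = 1) (x : E) : ⟪x - ⟪x, ν⟫ • ν, ν⟫ = 0 := by
  rw [inner_sub_left, real_inner_smul_left, real_inner_self_eq_norm_sq, hν, one_pow, mul_one,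
    sub_self]

theorem inner_smul_add_smul_add {ν X Y : E} (hν : ‖ν‖ = 1) (hX : ⟪X, ν⟫ = 0) (hY : ⟪Y, ν⟫ = 0)
    (a b : ℝ) : ⟪a • ν + X, b • ν + Y⟫ = a * b + ⟪X, Y⟫ := by
  rw [real_inner_comm] at hY
  simp only [inner_add_left, inner_add_right, real_inner_smul_left, real_inner_smul_right,
    real_inner_self_eq_norm_sq, hν, hX, hY]
  ring

theorem norm_smul_add_sq {ν X : E} (hν : ‖ν‖ = 1) (hX : ⟪X, ν⟫ = 0) (a : ℝ) :
    ‖a • ν + X‖ ^ 2 = a ^ 2 + ‖X‖ ^ 2 := by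
  rw [← real_inner_self_eq_norm_sq, ← real_inner_self_eq_norm_sq, inner_smul_add_smul_add hν hX hX,
    sq]

theorem sum_sum_sq_add_inner {τ : Type*} [Fintype τ] (a : τ → ℝ) (X : τ → E) :
    ∑ s, ∑ t, (a s * a t + ⟪X s, X t⟫) ^ 2
      = (∑ s, a s ^ 2) ^ 2 + 2 * ‖∑ s, a s • X s‖ ^ 2 + ∑ s, ∑ t, ⟪X s, X t⟫ ^ 2 := by
  rw [← real_inner_self_eq_norm_sq]
  simp only [sum_inner]
  simp only [inner_sum, real_inner_smul_left, real_inner_smul_right, sq, sum_mul, mul_sum,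
    ← sum_add_distrib]
  exact sum_congr rfl fun s _ => sum_congr rfl fun t _ => by ring

theorem sum_sum_sum_sum_sq_add_inner {ι : Type*} [Fintype ι] (a : ι → ι → ℝ) (X : ι → ι → E) :
    ∑ i, ∑ j, ∑ p, ∑ q, (a i j * a p q + ⟪X i j, X p q⟫) ^ 2
      = (∑ i, ∑ j, a i j ^ 2) ^ 2 + 2 * ‖∑ i, ∑ j, a i j • X i j‖ ^ 2
        + ∑ i, ∑ j, ∑ p, ∑ q, ⟪X i j, X p q⟫ ^ 2 := by
  simpa only [Fintype.sum_prod_type] using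
    sum_sum_sq_add_inner (fun s : ι × ι => a s.1 s.2) (fun s => X s.1 s.2)

end InnerProduct

section Diagonal

variable {E : Type*} [NormedAddCommGroup E] [InnerProductSpace ℝ E]
variable {ι : Type*} [Fintype ι] [DecidableEq ι]

theorem sum_sum_sub_diag_sq (a : ι → ι → ℝ) (c : ℝ) :
    ∑ i, ∑ j, (a i j - c * (if i = j then 1 else 0)) ^ 2
      = ∑ i, ∑ j, a i j ^ 2 - 2 * c * ∑ i, a i i + Fintype.card ι * c ^ 2 := by
  have h : ∀ i j, (a i j - c * (if i = j then 1 else 0)) ^ 2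
      = a i j ^ 2 - (if i = j then 2 * c * a i j else 0) + (if i = j then c ^ 2 else 0) := by
    intro i j; split_ifs <;> ring
  simp only [h, sum_add_distrib, sum_sub_distrib, sum_ite_eq, mem_univ, if_true, ← mul_sum,
    sum_const, card_univ, nsmul_eq_mul]

theorem sum_sum_sub_diag_smul (a : ι → ι → ℝ) (c : ℝ) {X : ι → ι → E} (hX : ∑ i, X i i = 0) :
    ∑ i, ∑ j, (a i j - c * (if i = j then 1 else 0)) • X i j = ∑ i, ∑ j, a i j • X i j := by
  simp [sub_smul, ite_smul, ← smul_sum, hX]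

theorem sum_sub_diag_smul_sub (a : ι → ι → ℝ) (c : ℝ) {X : ι → ι → E}
    (hX : ∀ i j, X i j = X j i) (i j : ι) :
    ∑ k, ((a i k - c * (if i = k then 1 else 0)) • X j k
        - (a j k - c * (if j = k then 1 else 0)) • X i k)
      = ∑ k, (a i k • X j k - a j k • X i k) := by
  simp [sub_smul, ite_smul, sum_sub_distrib, hX j i]

end Diagonal

section Wedge

variable {E : Type*} [NormedAddCommGroup E] [InnerProductSpace ℝ E] {κ : Type*} [Fintype κ]

/-- The squared norm of the bivector `∑ₖ xₖ ∧ yₖ`, for the inner product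
`⟪a ∧ b, c ∧ d⟫ = ⟪a, c⟫ ⟪b, d⟫ - ⟪a, d⟫ ⟪b, c⟫` on `Λ²E`. -/
def wedgeNormSq (x y : κ → E) : ℝ :=
  ∑ k, ∑ l, (⟪x k, x l⟫ * ⟪y k, y l⟫ - ⟪x k, y l⟫ * ⟪y k, x l⟫)

theorem sum_sum_sq_wedge_apply_eq_two_mul_wedgeNormSq {μ : Type*} [Fintype μ]
    (x y : κ → EuclideanSpace ℝ μ) :
    ∑ α, ∑ β, (∑ k, (x k α * y k β - y k α * x k β)) ^ 2 = 2 * wedgeNormSq x y := by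
  set g : μ → μ → ℝ := fun α β =>
    ∑ k, ∑ l, (x l α * x k α * (y l β * y k β) - y l α * x k α * (x l β * y k β)) with hg_def
  have hsq : ∀ α β, (∑ k, (x k α * y k β - y k α * x k β)) ^ 2 = g α β + g β α := by
    intro α β
    simp only [hg_def, sq, sum_mul_sum, ← sum_add_distrib]
    exact sum_congr rfl fun k _ => sum_congr rfl fun l _ => by ring
  have hg : ∑ α, ∑ β, g α β = wedgeNormSq x y := by
    simp only [hg_def, wedgeNormSq, PiLp.inner_apply, RCLike.inner_apply, conj_trivial,
      sum_mul_sum, ← sum_sub_distrib]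
    -- commuting only `μ`-sums past `κ`-sums terminates, and brings both sides to `∑ k, ∑ l, ∑ α, ∑ β`
    simp only [sum_comm (s := (univ : Finset μ)) (t := (univ : Finset κ))]
  simp only [hsq, sum_add_distrib]
  rw [sum_comm (f := fun α β => g β α), hg]
  ring

theorem wedgeNormSq_smul_add_smul_add {ν : E} (hν : ‖ν‖ = 1) {X Y : κ → E}
    (hX : ∀ k, ⟪X k, ν⟫ = 0) (hY : ∀ k, ⟪Y k, ν⟫ = 0) (a b : κ → ℝ) :
    wedgeNormSq (fun k => a k • ν + X k) (fun k => b k • ν + Y k)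
      = ‖∑ k, (a k • Y k - b k • X k)‖ ^ 2 + wedgeNormSq X Y := by
  rw [← real_inner_self_eq_norm_sq]
  simp only [wedgeNormSq, inner_smul_add_smul_add hν (hX _) (hX _),
    inner_smul_add_smul_add hν (hX _) (hY _), inner_smul_add_smul_add hν (hY _) (hX _),
    inner_smul_add_smul_add hν (hY _) (hY _), sum_inner]
  simp only [inner_sum, inner_sub_left, inner_sub_right, real_inner_smul_left,
    real_inner_smul_right, ← sum_add_distrib]
  exact sum_congr rfl fun k _ => sum_congr rfl fun l _ => by ring

end Wedge

theorem stmt_12_general (n m : ℕ) (hn : 2 ≤ n)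
    (c₀ : ℝ) (hc₀ : 1 / (n : ℝ) < c₀)
    (A : Fin n → Fin n → EuclideanSpace ℝ (Fin m))
    (hA : ∀ i j, A i j = A j i)
    (H : EuclideanSpace ℝ (Fin m)) (hHdef : H = ∑ i, A i i) (hH0 : H ≠ 0)
    (ν : EuclideanSpace ℝ (Fin m)) (hν : ν = ‖H‖⁻¹ • H)
    (h : Fin n → Fin n → ℝ) (hh : ∀ i j, h i j = ⟪A i j, ν⟫)
    (h' : Fin n → Fin n → ℝ)
    (hh' : ∀ i j, h' i j = h i j - (‖H‖ / (n : ℝ)) * (if i = j then 1 else 0))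
    (Ahat : Fin n → Fin n → EuclideanSpace ℝ (Fin m))
    (hAhat : ∀ i j, Ahat i j = A i j - (h i j) • ν)
    (normA2 : ℝ) (hnormA2 : normA2 = ∑ i, ∑ j, ‖A i j‖ ^ 2)
    (normAhat2 : ℝ) (hnormAhat2 : normAhat2 = ∑ i, ∑ j, ‖Ahat i j‖ ^ 2)
    (normh'2 : ℝ) (hnormh'2 : normh'2 = ∑ i, ∑ j, (h' i j) ^ 2)
    (f : ℝ) (hf : f = c₀ * ‖H‖ ^ 2 - normA2)
    (AH2 : ℝ) (hAH2 : AH2 = ∑ i, ∑ j, ⟪A i j, H⟫ ^ 2)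
    (AA2 : ℝ) (hAA2 : AA2 = ∑ i, ∑ j, ∑ p, ∑ q, ⟪A i j, A p q⟫ ^ 2)
    (AhatAhat2 : ℝ)
    (hAhatAhat2 : AhatAhat2 = ∑ i, ∑ j, ∑ p, ∑ q, ⟪Ahat i j, Ahat p q⟫ ^ 2)
    (Rperp2 : ℝ)
    (hRperp2 : Rperp2 = ∑ i, ∑ j, ∑ α, ∑ β,
      (∑ k, (A i k α * A j k β - A j k α * A i k β)) ^ 2)
    (Rhatperp2 : ℝ)
    (hRhatperp2 : Rhatperp2 = ∑ i, ∑ j, ∑ α, ∑ β,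
      (∑ k, (Ahat i k α * Ahat j k β - Ahat j k α * Ahat i k β)) ^ 2)
    (Rperpν2 : ℝ)
    (hRperpν2 : Rperpν2 = ∑ i, ∑ j,
      ‖∑ k, ((h' i k) • (Ahat j k) - (h' j k) • (Ahat i k))‖ ^ 2)
    (hdotAhat2 : ℝ)
    (hhdotAhat2 : hdotAhat2 = ‖∑ i, ∑ j, (h' i j) • (Ahat i j)‖ ^ 2) :
    c₀ * AH2 - AA2 - Rperp2
      = (2 / ((n : ℝ) * c₀ - 1)) * normAhat2 * f
        + ((n : ℝ) * c₀ / ((n : ℝ) * c₀ - 1)) * normh'2 * f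
        + (1 / ((n : ℝ) * c₀ - 1)) * f ^ 2
        + 2 * (2 * normh'2 * normAhat2 - hdotAhat2 - Rperpν2)
        + ((3 / 2) * normAhat2 ^ 2 - AhatAhat2 - Rhatperp2)
        + (1 / ((n : ℝ) * c₀ - 1) - 3 / 2) * normAhat2 ^ 2
        + ((n : ℝ) * c₀ / ((n : ℝ) * c₀ - 1) - 4) * normh'2 * normAhat2 := by
  have hn_pos : (0 : ℝ) < n := Nat.cast_pos.mpr (by omega)
  have hD : c₀ * n - 1 ≠ 0 := (sub_pos.mpr <| by linarith [(div_lt_iff₀ hn_pos).1 hc₀]).ne'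
  have hν1 : ‖ν‖ = 1 := hν ▸ norm_smul_inv_norm hH0
  have hHν : H = ‖H‖ • ν := by
    rw [hν, smul_smul, mul_inv_cancel₀ (norm_ne_zero_iff.mpr hH0), one_smul]
  have hAhatν : ∀ i j, ⟪Ahat i j, ν⟫ = 0 := fun i j => by
    rw [hAhat, hh, inner_sub_inner_smul_self hν1]
  have hA_split : A = fun i j => h i j • ν + Ahat i j := by
    funext i j
    rw [hAhat, add_sub_cancel]
  have hAhat_symm : ∀ i j, Ahat i j = Ahat j i := fun i j => by rw [hAhat, hAhat, hh, hh, hA]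
  have htr_h : ∑ i, h i i = ‖H‖ := by
    simp only [hh, ← sum_inner, ← hHdef]
    nth_rw 1 [hHν]
    rw [real_inner_smul_left, real_inner_self_eq_norm_sq, hν1, one_pow, mul_one]
  have htr_Ahat : ∑ i, Ahat i i = 0 := by
    rw [sum_congr rfl fun i _ => hAhat i i, sum_sub_distrib, ← sum_smul, htr_h, ← hHν, hHdef,
      sub_self]
  have hh2 : ∑ i, ∑ j, h i j ^ 2 = normh'2 + ‖H‖ ^ 2 / n := by
    simp only [hnormh'2, hh', sum_sum_sub_diag_sq, htr_h, Fintype.card_fin]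
    field_simp
    ring
  have hA2 : normA2 = ∑ i, ∑ j, h i j ^ 2 + normAhat2 := by
    simp only [hnormA2, hnormAhat2, hA_split, norm_smul_add_sq hν1 (hAhatν _ _), sum_add_distrib]
  have hAH : AH2 = ‖H‖ ^ 2 * ∑ i, ∑ j, h i j ^ 2 := by
    have hAH_inner : ∀ i j, ⟪A i j, H⟫ = ‖H‖ * h i j := fun i j => by
      rw [hh, ← real_inner_smul_right, ← hHν]
    simp only [hAH2, hAH_inner, mul_pow, mul_sum]
  have hAA : AA2 = (∑ i, ∑ j, h i j ^ 2) ^ 2 + 2 * hdotAhat2 + AhatAhat2 := by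
    simp only [hAA2, hAhatAhat2, hhdotAhat2, hA_split,
      inner_smul_add_smul_add hν1 (hAhatν _ _) (hAhatν _ _), sum_sum_sum_sum_sq_add_inner, hh',
      sum_sum_sub_diag_smul _ _ htr_Ahat]
  have hR : Rperp2 = 2 * Rperpν2 + Rhatperp2 := by
    simp only [hRperp2, hRhatperp2, hRperpν2, sum_sum_sq_wedge_apply_eq_two_mul_wedgeNormSq, hh',
      sum_sub_diag_smul_sub _ _ hAhat_symm, hA_split,
      wedgeNormSq_smul_add_smul_add hν1 (hAhatν _) (hAhatν _), mul_add, sum_add_distrib, mul_sum]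
  rw [hAH, hAA, hR, hf, hA2, hh2]
  field_simp
  ring

/-- The reaction-term identity from Appendix B.1 of the paper, governing the
preservation of `c₀`-pinching under mean curvature flow: for a vector-valued
second fundamental form `A` in codimension `m` with mean curvature `H ≠ 0`,
principal normal `ν = H/‖H‖`, principal part `h`, tracefree principal part `ḣ`,
and complementary part `Â`,
`c₀|⟨A,H⟩|² − |⟨A,A⟩|² − |R⊥|²` decomposes as stated. -/
theorem stmt_12 (n m : ℕ) (hn : 2 ≤ n) (hm : 1 ≤ m)
    (c₀ : ℝ) (hc₀ : 1 / (n : ℝ) < c₀)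
    (A : Fin n → Fin n → EuclideanSpace ℝ (Fin m))
    (hA : ∀ i j, A i j = A j i)
    (H : EuclideanSpace ℝ (Fin m)) (hHdef : H = ∑ i, A i i) (hH0 : H ≠ 0)
    (ν : EuclideanSpace ℝ (Fin m)) (hν : ν = ‖H‖⁻¹ • H)
    (h : Fin n → Fin n → ℝ) (hh : ∀ i j, h i j = ⟪A i j, ν⟫)
    (h' : Fin n → Fin n → ℝ)
    (hh' : ∀ i j, h' i j = h i j - (‖H‖ / (n : ℝ)) * (if i = j then 1 else 0))
    (Ahat : Fin n → Fin n → EuclideanSpace ℝ (Fin m))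
    (hAhat : ∀ i j, Ahat i j = A i j - (h i j) • ν)
    (normA2 : ℝ) (hnormA2 : normA2 = ∑ i, ∑ j, ‖A i j‖ ^ 2)
    (normAhat2 : ℝ) (hnormAhat2 : normAhat2 = ∑ i, ∑ j, ‖Ahat i j‖ ^ 2)
    (normh'2 : ℝ) (hnormh'2 : normh'2 = ∑ i, ∑ j, (h' i j) ^ 2)
    (f : ℝ) (hf : f = c₀ * ‖H‖ ^ 2 - normA2)
    (AH2 : ℝ) (hAH2 : AH2 = ∑ i, ∑ j, ⟪A i j, H⟫ ^ 2)
    (AA2 : ℝ) (hAA2 : AA2 = ∑ i, ∑ j, ∑ p, ∑ q, ⟪A i j, A p q⟫ ^ 2)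
    (AhatAhat2 : ℝ)
    (hAhatAhat2 : AhatAhat2 = ∑ i, ∑ j, ∑ p, ∑ q, ⟪Ahat i j, Ahat p q⟫ ^ 2)
    (Rperp2 : ℝ)
    (hRperp2 : Rperp2 = ∑ i, ∑ j, ∑ α, ∑ β,
      (∑ k, (A i k α * A j k β - A j k α * A i k β)) ^ 2)
    (Rhatperp2 : ℝ)
    (hRhatperp2 : Rhatperp2 = ∑ i, ∑ j, ∑ α, ∑ β,
      (∑ k, (Ahat i k α * Ahat j k β - Ahat j k α * Ahat i k β)) ^ 2)
    (Rperpν2 : ℝ)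
    (hRperpν2 : Rperpν2 = ∑ i, ∑ j,
      ‖∑ k, ((h' i k) • (Ahat j k) - (h' j k) • (Ahat i k))‖ ^ 2)
    (hdotAhat2 : ℝ)
    (hhdotAhat2 : hdotAhat2 = ‖∑ i, ∑ j, (h' i j) • (Ahat i j)‖ ^ 2) :
    c₀ * AH2 - AA2 - Rperp2
      = (2 / ((n : ℝ) * c₀ - 1)) * normAhat2 * f
        + ((n : ℝ) * c₀ / ((n : ℝ) * c₀ - 1)) * normh'2 * f
        + (1 / ((n : ℝ) * c₀ - 1)) * f ^ 2
        + 2 * (2 * normh'2 * normAhat2 - hdotAhat2 - Rperpν2)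
        + ((3 / 2) * normAhat2 ^ 2 - AhatAhat2 - Rhatperp2)
        + (1 / ((n : ℝ) * c₀ - 1) - 3 / 2) * normAhat2 ^ 2
        + ((n : ℝ) * c₀ / ((n : ℝ) * c₀ - 1) - 4) * normh'2 * normAhat2 :=
  stmt_12_general n m hn c₀ hc₀ A hA H hHdef hH0 ν hν h hh h' hh' Ahat hAhat normA2 hnormA2
    normAhat2 hnormAhat2 normh'2 hnormh'2 f hf AH2 hAH2 AA2 hAA2 AhatAhat2 hAhatAhat2 Rperp2 hRperp2
    Rhatperp2 hRhatperp2 Rperpν2 hRperpν2 hdotAhat2 hhdotAhat2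
end
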